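/- Let E be a cycle graph with vertices u_1, …, u_n and edges f_1, …, f_n where s(f_i) = u_i, r(f_i) = u_{i+1} for i < n and r(f_n) = u_1, and let c_i = f_i ⋯ f_n f_1 ⋯ f_{i-1} be the closed path based at u_i traversing the cycle once. Then the center of the path algebra KE equals { Σ_{i=1}^n p(c_i) : p(x) ∈ K[x] }, and the map sending Σ_{i=1}^n p(c_i) to p is a K-algebra isomorphism from Z(KE) onto the polynomial algebra K[x]. -/

import Mathlib

/-! Basic infrastructure: directed graphs and their path algebras.

The path algebra `KE` is realized as the non-unital subalgebra generated by the
(images of the) vertices and edges inside the unital algebra `PA K E`, which is the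
quotient of the free algebra on vertices and edges by the usual path-algebra
relations (vertices are orthogonal idempotents acting as local units on edges).
Words of composable edges are exactly the paths, so `KE` has the paths as a basis. -/

/-- A directed graph `E = (E⁰, E¹, s, r)`. -/
structure DirGraph : Type 1 where
  V : Type
  Edge : Type
  s : Edge → V
  r : Edge → V

/-- A (non-unital, possibly non-closed) subset `S` of an algebra is *prime* if it is nonzero
and `a S b = 0` implies `a = 0` or `b = 0` for `a, b ∈ S`. -/
def IsPrimeSet {A : Type} [NonUnitalNonAssocSemiring A] (S : Set A) : Prop :=
  (∃ a ∈ S, a ≠ 0) ∧ ∀ a ∈ S, ∀ b ∈ S, (∀ x ∈ S, a * x * b = 0) → a = 0 ∨ b = 0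

/-- `J` is a two-sided ideal of the (possibly non-unital) subalgebra with carrier `S`. -/
def IsIdealOf (K : Type) [Field K] {A : Type} [Ring A] [Algebra K A] (S J : Set A) : Prop :=
  J ⊆ S ∧ (0 : A) ∈ J ∧ (∀ x ∈ J, ∀ y ∈ J, x + y ∈ J) ∧
    (∀ k : K, ∀ x ∈ J, k • x ∈ J) ∧ (∀ a ∈ S, ∀ x ∈ J, a * x ∈ J ∧ x * a ∈ J)

namespace DirGraph

/-- Generators of the path algebra: vertices and edges. -/
abbrev Gen (E : DirGraph) : Type := E.V ⊕ E.Edge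

variable (K : Type) [Field K] (E : DirGraph)

/-- The defining relations of the path algebra: vertices are orthogonal idempotents,
`s(e)·e = e`, `e·r(e) = e`, and all other vertex-edge products vanish. -/
inductive PathRel : FreeAlgebra K E.Gen → FreeAlgebra K E.Gen → Prop
  | vv_eq (u : E.V) :
      PathRel (FreeAlgebra.ι K (Sum.inl u) * FreeAlgebra.ι K (Sum.inl u))
        (FreeAlgebra.ι K (Sum.inl u))
  | vv_ne (u v : E.V) : u ≠ v →
      PathRel (FreeAlgebra.ι K (Sum.inl u) * FreeAlgebra.ι K (Sum.inl v)) 0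
  | ve_eq (e : E.Edge) :
      PathRel (FreeAlgebra.ι K (Sum.inl (E.s e)) * FreeAlgebra.ι K (Sum.inr e))
        (FreeAlgebra.ι K (Sum.inr e))
  | ve_ne (u : E.V) (e : E.Edge) : E.s e ≠ u →
      PathRel (FreeAlgebra.ι K (Sum.inl u) * FreeAlgebra.ι K (Sum.inr e)) 0
  | ev_eq (e : E.Edge) :
      PathRel (FreeAlgebra.ι K (Sum.inr e) * FreeAlgebra.ι K (Sum.inl (E.r e)))
        (FreeAlgebra.ι K (Sum.inr e))
  | ev_ne (e : E.Edge) (u : E.V) : E.r e ≠ u →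
      PathRel (FreeAlgebra.ι K (Sum.inr e) * FreeAlgebra.ι K (Sum.inl u)) 0

/-- The ambient unital algebra (the unitalization of the path algebra). -/
abbrev PA : Type := RingQuot (E.PathRel K)

/-- The image of a vertex in the path algebra. -/
noncomputable def vtx (u : E.V) : E.PA K :=
  RingQuot.mkAlgHom K (E.PathRel K) (FreeAlgebra.ι K (Sum.inl u))

/-- The image of an edge in the path algebra. -/
noncomputable def edg (e : E.Edge) : E.PA K :=
  RingQuot.mkAlgHom K (E.PathRel K) (FreeAlgebra.ι K (Sum.inr e))

/-- The path algebra `KE`: the (non-unital) subalgebra spanned by all paths, i.e.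
generated by the vertices and edges. -/
noncomputable def KE : NonUnitalSubalgebra K (E.PA K) :=
  NonUnitalAlgebra.adjoin K (Set.range (E.vtx K) ∪ Set.range (E.edg K))

/-- The center `Z(KE)` of the path algebra. -/
def relCenter : Set (E.PA K) :=
  {z | z ∈ E.KE K ∧ ∀ a ∈ E.KE K, a * z = z * a}

/-- `E.IsPathFrom u v l` : the list of edges `l` is a path from `u` to `v`
(`l = []` is the trivial path at `u = v`). -/
def IsPathFrom : E.V → E.V → List E.Edge → Prop
  | u, v, [] => u = v
  | u, v, e :: l => E.s e = u ∧ IsPathFrom (E.r e) v l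

/-- The element of the path algebra corresponding to the path starting at `u`
with list of edges `l` (for `l = []` this is the vertex `u` itself). -/
noncomputable def pathElem (u : E.V) (l : List E.Edge) : E.PA K :=
  E.vtx K u * (l.map (E.edg K)).prod

/-- The sum of all vertices: the unit of `KE` when `E⁰` is finite. -/
noncomputable def unitKE : E.PA K := ∑ᶠ u : E.V, E.vtx K u

/-- The scalar multiples `K·1` of the unit of `KE`. -/
noncomputable def scalarSet : Set (E.PA K) := Set.range fun k : K => k • E.unitKE K

/-- One step in the underlying undirected graph. -/
def Step (u v : E.V) : Prop :=
  (∃ e : E.Edge, E.s e = u ∧ E.r e = v) ∨ (∃ e : E.Edge, E.s e = v ∧ E.r e = u)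

/-- `u ∼ v` : the vertices `u` and `v` are connected in the underlying undirected graph. -/
def Connected (u v : E.V) : Prop := Relation.ReflTransGen E.Step u v

/-- The graph `E` is connected. -/
def IsConnectedGraph : Prop := ∀ u v : E.V, E.Connected u v

/-- The graph `E` is a cycle: `n ≥ 1` vertices `u₁, …, uₙ` and `n` edges `f₁, …, fₙ` with
`s(fᵢ) = uᵢ`, `r(fᵢ) = uᵢ₊₁` (indices mod `n`). -/
def IsCycleGraph : Prop :=
  ∃ n : ℕ, ∃ hn : 0 < n, ∃ (hv : Fin n ≃ E.V) (he : Fin n ≃ E.Edge),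
    ∀ i : Fin n, E.s (he i) = hv i ∧ E.r (he i) = hv ⟨(i.1 + 1) % n, Nat.mod_lt _ hn⟩

end DirGraph

/-- The cycle graph with `n` vertices `0, 1, …, n-1` and edges `fᵢ : i → i+1 (mod n)`. -/
def cycGraph (n : ℕ) [NeZero n] : DirGraph where
  V := Fin n
  Edge := Fin n
  s := id
  r := fun i => i + 1

/-- The closed path `cᵢ = fᵢ f_{i+1} ⋯ f_{i+n-1}` based at the vertex `i`,
traversing the cycle once, as an element of the path algebra. -/
noncomputable def cycElem (K : Type) [Field K] (n : ℕ) [NeZero n] (i : Fin n) :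
    (cycGraph n).PA K :=
  (cycGraph n).pathElem K i (List.ofFn fun j : Fin n => i + j)

/-! Write `(i, ℓ)` for the path of length `ℓ` starting at the vertex `i`. Letting `KE` act by left
multiplication on the formal span of these symbols, `x` sends the sum of the vertices to the
vector of its path coefficients; so the paths are linearly independent and an element of `KE`
is determined by its path coefficients. For a central `z`, comparing coefficients in `uᵢ z = z uᵢ` kills those of
the paths that are not closed (`n ∤ ℓ`), and `fⱼ z = z fⱼ` says that `(j + 1, ℓ)` and `(j, ℓ)`
have the same coefficient. So `z` is determined by the coefficients of the powers of `c₀`,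
i.e. by a polynomial `p`, and equals `∑ᵢ uᵢ p(cᵢ)`. Conversely, the vertices are orthogonal
idempotents with `uᵢ cᵢ = cᵢ uᵢ` and `fⱼ cⱼ₊₁ = cⱼ fⱼ`, which makes `p ↦ ∑ᵢ uᵢ p(cᵢ)` a
multiplicative map into the center. -/

open Polynomial Fin.NatCast Fin.CommRing

section CornerAeval

variable {R A ι : Type*} [CommSemiring R] [Semiring A] [Algebra R A]

theorem SemiconjBy.aeval {a x y : A} (h : SemiconjBy a x y) (p : R[X]) :
    SemiconjBy a (aeval x p) (aeval y p) := by
  induction p using Polynomial.induction_on' with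
  | add p q hp hq => simpa only [map_add] using hp.add_right hq
  | monomial m c =>
    simpa only [aeval_monomial] using
      SemiconjBy.mul_right (Algebra.commute_algebraMap_right c a) (h.pow_right m)

theorem mul_aeval_eq_sum (e x : A) (p : R[X]) :
    e * aeval x p = p.sum fun m c => c • (e * x ^ m) := by
  simp only [aeval_def, eval₂_eq_sum, Polynomial.sum_def, Finset.mul_sum, Algebra.smul_def,
    Algebra.left_comm e]

variable [Fintype ι] {e : ι → A}

namespace OrthogonalIdempotents

theorem mul_sum_mul (he : OrthogonalIdempotents e) (a : ι → A) (j : ι) :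
    e j * ∑ i, e i * a i = e j * a j := by
  classical
  simp only [Finset.mul_sum, ← mul_assoc, he.mul_eq, ite_mul, zero_mul, Finset.sum_ite_eq,
    Finset.mem_univ, if_true]

theorem sum_mul_mul (he : OrthogonalIdempotents e) {a : ι → A} (ha : ∀ i, Commute (e i) (a i))
    (j : ι) : (∑ i, e i * a i) * e j = e j * a j := by
  classical
  simp only [fun i => (ha i).eq, Finset.sum_mul, mul_assoc, he.mul_eq, mul_ite, mul_zero,
    Finset.sum_ite_eq', Finset.mem_univ, if_true]

noncomputable def cornerAeval (he : OrthogonalIdempotents e) (x : ι → A)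
    (hx : ∀ i, Commute (e i) (x i)) : R[X] →ₙₐ[R] A where
  toFun p := ∑ i, e i * aeval (x i) p
  map_smul' c p := by simp only [map_smul, mul_smul_comm, Finset.smul_sum, MonoidHom.id_apply]
  map_zero' := by simp only [map_zero, mul_zero, Finset.sum_const_zero]
  map_add' p q := by simp only [map_add, mul_add, Finset.sum_add_distrib]
  map_mul' p q := by
    rw [Finset.sum_mul]
    refine Finset.sum_congr rfl fun i _ => ?_
    have hc := ((hx i).aeval p).eq
    rw [hc, mul_assoc, he.mul_sum_mul, map_mul, ← mul_assoc, ← mul_assoc, hc]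

variable (he : OrthogonalIdempotents e) (x : ι → A) (hx : ∀ i, Commute (e i) (x i))

theorem cornerAeval_apply (p : R[X]) : he.cornerAeval x hx p = ∑ i, e i * aeval (x i) p := rfl

theorem mul_cornerAeval (p : R[X]) (j : ι) :
    e j * he.cornerAeval x hx p = e j * aeval (x j) p :=
  he.mul_sum_mul _ j

theorem cornerAeval_mul (p : R[X]) (j : ι) :
    he.cornerAeval x hx p * e j = e j * aeval (x j) p :=
  he.sum_mul_mul (fun i => (hx i).aeval p) j

end OrthogonalIdempotents

end CornerAeval

namespace DirGraph

variable {K : Type} [Field K] {E : DirGraph}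

theorem orthogonalIdempotents_vtx : OrthogonalIdempotents (E.vtx K) where
  idem u := (map_mul _ _ _).symm.trans (RingQuot.mkAlgHom_rel K (PathRel.vv_eq u))
  ortho u v h := by
    simp only [vtx, ← map_mul, RingQuot.mkAlgHom_rel K (PathRel.vv_ne u v h), map_zero]

theorem vtx_mul_edg [DecidableEq E.V] (u : E.V) (e : E.Edge) :
    E.vtx K u * E.edg K e = if E.s e = u then E.edg K e else 0 := by
  simp only [vtx, edg, ← map_mul]
  split_ifs with h
  · subst h
    exact RingQuot.mkAlgHom_rel K (PathRel.ve_eq e)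
  · rw [RingQuot.mkAlgHom_rel K (PathRel.ve_ne u e h), map_zero]

theorem edg_mul_vtx [DecidableEq E.V] (e : E.Edge) (u : E.V) :
    E.edg K e * E.vtx K u = if E.r e = u then E.edg K e else 0 := by
  simp only [vtx, edg, ← map_mul]
  split_ifs with h
  · subst h
    exact RingQuot.mkAlgHom_rel K (PathRel.ev_eq e)
  · rw [RingQuot.mkAlgHom_rel K (PathRel.ev_ne e u h), map_zero]

theorem pathElem_cons {u : E.V} {e : E.Edge} (he : E.s e = u) (l : List E.Edge) :
    E.pathElem K u (e :: l) = E.edg K e * E.pathElem K (E.r e) l := by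
  classical
  have hs : E.vtx K u * E.edg K e = E.edg K e := by rw [vtx_mul_edg, if_pos he]
  have hr : E.edg K e * E.vtx K (E.r e) = E.edg K e := by rw [edg_mul_vtx, if_pos rfl]
  rw [pathElem, pathElem, List.map_cons, List.prod_cons, ← mul_assoc, hs, ← mul_assoc, hr]

end DirGraph

namespace cycGraph

variable {K : Type} [Field K] {n : ℕ} [NeZero n]

/- `(cycGraph n).V` and `(cycGraph n).Edge` are `Fin n` only after unfolding `cycGraph`, which
`rw` and `simp` do not do; hence the general lemmas are restated here with `Fin n` arguments. -/

theorem orthogonalIdempotents_vtx :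
    OrthogonalIdempotents fun i : Fin n => (cycGraph n).vtx K i :=
  DirGraph.orthogonalIdempotents_vtx (K := K) (E := cycGraph n)

theorem vtx_mul_vtx (u i : Fin n) :
    (cycGraph n).vtx K u * (cycGraph n).vtx K i = if u = i then (cycGraph n).vtx K u else 0 :=
  orthogonalIdempotents_vtx.mul_eq u i

theorem vtx_mul_edg (u i : Fin n) :
    (cycGraph n).vtx K u * (cycGraph n).edg K i = if i = u then (cycGraph n).edg K i else 0 :=
  @DirGraph.vtx_mul_edg K _ (cycGraph n) (instDecidableEqFin n) u i

theorem edg_mul_vtx (i u : Fin n) :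
    (cycGraph n).edg K i * (cycGraph n).vtx K u =
      if i + 1 = u then (cycGraph n).edg K i else 0 :=
  @DirGraph.edg_mul_vtx K _ (cycGraph n) (instDecidableEqFin n) i u

theorem pathElem_cons (i : Fin n) (l : List (Fin n)) :
    (cycGraph n).pathElem K i (i :: l) = (cycGraph n).edg K i * (cycGraph n).pathElem K (i + 1) l :=
  DirGraph.pathElem_cons (E := cycGraph n) (e := i) rfl l

variable (K) in
noncomputable def path : Fin n → ℕ → (cycGraph n).PA K
  | i, 0 => (cycGraph n).vtx K i
  | i, ℓ + 1 => (cycGraph n).edg K i * path (i + 1) ℓ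

theorem path_zero (i : Fin n) : path K i 0 = (cycGraph n).vtx K i := rfl

theorem path_succ (i : Fin n) (ℓ : ℕ) :
    path K i (ℓ + 1) = (cycGraph n).edg K i * path K (i + 1) ℓ := rfl

theorem path_one (i : Fin n) : path K i 1 = (cycGraph n).edg K i := by
  rw [path_succ, path_zero, edg_mul_vtx, if_pos rfl]

theorem vtx_mul_path (u i : Fin n) (ℓ : ℕ) :
    (cycGraph n).vtx K u * path K i ℓ = if i = u then path K i ℓ else 0 := by
  cases ℓ with
  | zero =>
    rw [path_zero, vtx_mul_vtx]
    by_cases h : u = i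
    · subst h; simp
    · simp [h, Ne.symm h]
  | succ ℓ =>
    rw [path_succ, ← mul_assoc, vtx_mul_edg]
    split_ifs <;> first | rfl | exact zero_mul _

theorem path_mul_path (i : Fin n) (ℓ : ℕ) (j : Fin n) (m : ℕ) :
    path K i ℓ * path K j m = if j = i + ℓ then path K i (ℓ + m) else 0 := by
  induction ℓ generalizing i with
  | zero =>
    rw [path_zero, vtx_mul_path, Nat.cast_zero, add_zero, zero_add]
    split_ifs with h <;> first | rfl | rw [h]
  | succ ℓ ih =>
    have hj : i + ((ℓ + 1 : ℕ) : Fin n) = i + 1 + ℓ := by push_cast; ring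
    rw [path_succ, mul_assoc, ih, hj, Nat.add_right_comm, path_succ, mul_ite, mul_zero]

theorem path_mul_vtx (i : Fin n) (ℓ : ℕ) (u : Fin n) :
    path K i ℓ * (cycGraph n).vtx K u = if u = i + ℓ then path K i ℓ else 0 := by
  rw [← path_zero, path_mul_path, add_zero]

theorem edg_mul_path (j i : Fin n) (ℓ : ℕ) :
    (cycGraph n).edg K j * path K i ℓ = if i = j + 1 then path K j (ℓ + 1) else 0 := by
  rw [← path_one, path_mul_path, Nat.cast_one, add_comm 1 ℓ]

theorem path_mul_edg (i : Fin n) (ℓ : ℕ) (j : Fin n) :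
    path K i ℓ * (cycGraph n).edg K j = if j = i + ℓ then path K i (ℓ + 1) else 0 := by
  rw [← path_one, path_mul_path]

theorem pathElem_ofFn (i : Fin n) (ℓ : ℕ) :
    (cycGraph n).pathElem K i (List.ofFn fun j : Fin ℓ => i + ((j : ℕ) : Fin n)) =
      path K i ℓ := by
  induction ℓ generalizing i with
  | zero => exact mul_one _
  | succ ℓ ih =>
    have hl : (List.ofFn fun j : Fin (ℓ + 1) => i + ((j : ℕ) : Fin n)) =
        i :: List.ofFn fun j : Fin ℓ => i + 1 + ((j : ℕ) : Fin n) := by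
      rw [List.ofFn_succ]
      congr 1
      · simp
      · congr 1; funext j; push_cast [Fin.val_succ]; ring
    exact (congrArg _ hl).trans ((pathElem_cons i _).trans (congrArg _ (ih (i + 1))))

theorem cycElem_eq_path (i : Fin n) : cycElem K n i = path K i n := by
  have h := pathElem_ofFn (K := K) i n
  simp only [Fin.cast_val_eq_self] at h
  exact h

theorem vtx_mul_cycElem_pow (i : Fin n) (m : ℕ) :
    (cycGraph n).vtx K i * cycElem K n i ^ m = path K i (m * n) := by
  induction m with
  | zero => rw [pow_zero, mul_one, zero_mul, path_zero]
  | succ m ih =>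
    have hi : i = i + ((m * n : ℕ) : Fin n) := by simp
    rw [pow_succ, ← mul_assoc, ih, cycElem_eq_path, path_mul_path, if_pos hi, Nat.succ_mul]

theorem commute_vtx_cycElem (i : Fin n) : Commute ((cycGraph n).vtx K i) (cycElem K n i) := by
  have hi : i = i + (n : Fin n) := by simp
  rw [Commute, SemiconjBy, cycElem_eq_path, vtx_mul_path, path_mul_vtx, if_pos rfl, if_pos hi]

theorem semiconjBy_edg_cycElem (j : Fin n) :
    SemiconjBy ((cycGraph n).edg K j) (cycElem K n (j + 1)) (cycElem K n j) := by
  have hj : j = j + (n : Fin n) := by simp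
  rw [SemiconjBy, cycElem_eq_path, cycElem_eq_path, edg_mul_path, path_mul_edg, if_pos rfl,
    if_pos hj]

variable (K) in
/-- Left multiplication by the path `(i, ℓ)` on the formal span of all paths `(j, m)`. -/
noncomputable def pathAction (i : Fin n) (ℓ : ℕ) : Module.End K (Fin n × ℕ →₀ K) :=
  Finsupp.linearCombination K fun q => if q.1 = i + ℓ then Finsupp.single (i, ℓ + q.2) 1 else 0

theorem pathAction_single (i : Fin n) (ℓ : ℕ) (q : Fin n × ℕ) (c : K) :
    pathAction K i ℓ (Finsupp.single q c) =
      if q.1 = i + ℓ then Finsupp.single (i, ℓ + q.2) c else 0 := by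
  rw [pathAction, Finsupp.linearCombination_single]
  split_ifs <;> simp

theorem pathAction_mul_pathAction (i : Fin n) (ℓ : ℕ) (j : Fin n) (m : ℕ) :
    pathAction K i ℓ * pathAction K j m =
      if j = i + ℓ then pathAction K i (ℓ + m) else 0 := by
  refine Finsupp.lhom_ext fun q c => ?_
  rw [Module.End.mul_apply, pathAction_single]
  by_cases hj : j = i + ℓ
  · subst hj
    by_cases hq : q.1 = i + (ℓ + m) <;> simp [pathAction_single, hq, add_assoc]
  · split_ifs <;> simp [pathAction_single, hj]

variable (K n) in
noncomputable def rep : (cycGraph n).PA K →ₐ[K] Module.End K (Fin n × ℕ →₀ K) :=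
  RingQuot.liftAlgHom K ⟨FreeAlgebra.lift K (Sum.elim (pathAction K · 0) (pathAction K · 1)), by
    rintro _ _ ((u : Fin n) | ⟨(u : Fin n), (v : Fin n), h⟩ | (e : Fin n) |
        ⟨(u : Fin n), (e : Fin n), h⟩ | (e : Fin n) | ⟨(e : Fin n), (u : Fin n), h⟩) <;>
      simp only [map_mul, map_zero, FreeAlgebra.lift_ι_apply, Sum.elim_inl] <;>
      refine (pathAction_mul_pathAction _ _ _ _).trans ?_
    · exact if_pos (show u = u + ((0 : ℕ) : Fin n) by simp)
    · exact if_neg (show ¬v = u + ((0 : ℕ) : Fin n) by simpa using fun h' : v = u => h h'.symm)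
    · exact if_pos (show e = e + ((0 : ℕ) : Fin n) by simp)
    · exact if_neg (show ¬e = u + ((0 : ℕ) : Fin n) by simpa using fun h' : e = u => h h')
    · exact if_pos (show e + 1 = e + ((1 : ℕ) : Fin n) by simp)
    · exact if_neg (show ¬u = e + ((1 : ℕ) : Fin n) by
        simpa using fun h' : u = e + 1 => h h'.symm)⟩

theorem rep_vtx (i : Fin n) : rep K n ((cycGraph n).vtx K i) = pathAction K i 0 := by
  simp only [rep, DirGraph.vtx, RingQuot.liftAlgHom_mkAlgHom_apply, FreeAlgebra.lift_ι_apply]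
  rfl

theorem rep_edg (i : Fin n) : rep K n ((cycGraph n).edg K i) = pathAction K i 1 := by
  simp only [rep, DirGraph.edg, RingQuot.liftAlgHom_mkAlgHom_apply, FreeAlgebra.lift_ι_apply]
  rfl

theorem rep_path (i : Fin n) (ℓ : ℕ) : rep K n (path K i ℓ) = pathAction K i ℓ := by
  induction ℓ generalizing i with
  | zero => exact rep_vtx i
  | succ ℓ ih =>
    rw [path_succ, map_mul, rep_edg, ih, pathAction_mul_pathAction, if_pos (by simp),
      add_comm 1 ℓ]

variable (K n) in
noncomputable def vertexSum : Fin n × ℕ →₀ K := ∑ u : Fin n, Finsupp.single (u, 0) 1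

theorem pathAction_vertexSum (i : Fin n) (ℓ : ℕ) :
    pathAction K i ℓ (vertexSum K n) = Finsupp.single (i, ℓ) 1 := by
  simp [vertexSum, pathAction_single]

variable (K) in
noncomputable def pathCoeff (q : Fin n × ℕ) : (cycGraph n).PA K →ₗ[K] K :=
  Finsupp.lapply q ∘ₗ LinearMap.applyₗ (vertexSum K n) ∘ₗ (rep K n).toLinearMap

theorem pathCoeff_path (q : Fin n × ℕ) (i : Fin n) (ℓ : ℕ) :
    pathCoeff K q (path K i ℓ) = if (i, ℓ) = q then 1 else 0 := by
  simp [pathCoeff, rep_path, pathAction_vertexSum, Finsupp.single_apply]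

theorem path_mem_KE (i : Fin n) (ℓ : ℕ) : path K i ℓ ∈ (cycGraph n).KE K := by
  induction ℓ generalizing i with
  | zero => exact NonUnitalAlgebra.subset_adjoin K (Or.inl ⟨i, rfl⟩)
  | succ ℓ ih => exact mul_mem (NonUnitalAlgebra.subset_adjoin K (Or.inr ⟨i, rfl⟩)) (ih _)

theorem mem_span_path_of_mem_KE {x : (cycGraph n).PA K} (hx : x ∈ (cycGraph n).KE K) :
    x ∈ Submodule.span K (Set.range fun q : Fin n × ℕ => path K q.1 q.2) := by
  set P := Submodule.span K (Set.range fun q : Fin n × ℕ => path K q.1 q.2)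
  have hPP : P * P ≤ P := by
    rw [Submodule.span_mul_span, Submodule.span_le]
    rintro _ ⟨_, ⟨q, rfl⟩, _, ⟨q', rfl⟩, rfl⟩
    simp only [SetLike.mem_coe, path_mul_path]
    split_ifs
    · exact Submodule.subset_span ⟨(q.1, q.2 + q'.2), rfl⟩
    · exact zero_mem _
  refine NonUnitalAlgebra.adjoin_le
    (S := P.toNonUnitalSubalgebra fun x y hx hy => hPP (Submodule.mul_mem_mul hx hy)) ?_ hx
  rintro _ (⟨u, rfl⟩ | ⟨e, rfl⟩)
  · exact Submodule.subset_span ⟨(u, 0), rfl⟩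
  · exact path_one (K := K) e ▸ Submodule.subset_span ⟨(e, 1), rfl⟩

theorem eqOn_KE_of_eq_path {M : Type*} [AddCommMonoid M] [Module K M]
    {f g : (cycGraph n).PA K →ₗ[K] M} (h : ∀ i ℓ, f (path K i ℓ) = g (path K i ℓ)) :
    Set.EqOn f g ((cycGraph n).KE K) := fun _ hx =>
  LinearMap.eqOn_span' (by rintro _ ⟨q, rfl⟩; exact h q.1 q.2) (mem_span_path_of_mem_KE hx)

variable {x : (cycGraph n).PA K}

theorem pathCoeff_vtx_mul (hx : x ∈ (cycGraph n).KE K) (i : Fin n) (ℓ : ℕ) :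
    pathCoeff K (i, ℓ) ((cycGraph n).vtx K i * x) = pathCoeff K (i, ℓ) x :=
  eqOn_KE_of_eq_path (f := pathCoeff K (i, ℓ) ∘ₗ LinearMap.mulLeft K ((cycGraph n).vtx K i))
    (fun j m => by
      by_cases h : j = i <;> simp [vtx_mul_path, pathCoeff_path, h]) hx

theorem pathCoeff_mul_vtx_of_not_dvd (hx : x ∈ (cycGraph n).KE K) (i : Fin n) {ℓ : ℕ}
    (hℓ : ¬n ∣ ℓ) : pathCoeff K (i, ℓ) (x * (cycGraph n).vtx K i) = 0 :=
  eqOn_KE_of_eq_path (f := pathCoeff K (i, ℓ) ∘ₗ LinearMap.mulRight K ((cycGraph n).vtx K i))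
    (g := 0) (fun j m => by
      simp only [LinearMap.comp_apply, LinearMap.mulRight_apply, path_mul_vtx]
      split_ifs with hj
      · rw [pathCoeff_path, if_neg, LinearMap.zero_apply]
        rintro ⟨⟩
        exact hℓ (Fin.natCast_eq_zero.1 (left_eq_add.1 hj))
      · simp) hx

theorem pathCoeff_edg_mul (hx : x ∈ (cycGraph n).KE K) (j : Fin n) (ℓ : ℕ) :
    pathCoeff K (j, ℓ + 1) ((cycGraph n).edg K j * x) = pathCoeff K (j + 1, ℓ) x :=
  eqOn_KE_of_eq_path
    (f := pathCoeff K (j, ℓ + 1) ∘ₗ LinearMap.mulLeft K ((cycGraph n).edg K j))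
    (fun k m => by
      by_cases h : k = j + 1 <;> simp [edg_mul_path, pathCoeff_path, h]) hx

theorem pathCoeff_mul_edg_of_dvd (hx : x ∈ (cycGraph n).KE K) (j : Fin n) {ℓ : ℕ}
    (hℓ : n ∣ ℓ) :
    pathCoeff K (j, ℓ + 1) (x * (cycGraph n).edg K j) = pathCoeff K (j, ℓ) x :=
  eqOn_KE_of_eq_path
    (f := pathCoeff K (j, ℓ + 1) ∘ₗ LinearMap.mulRight K ((cycGraph n).edg K j))
    (fun k m => by
      simp only [LinearMap.comp_apply, LinearMap.mulRight_apply, path_mul_edg]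
      split_ifs with hk
      · simp [pathCoeff_path]
      · rw [map_zero, pathCoeff_path, if_neg]
        rintro ⟨⟩
        exact hk (by simpa using hℓ)) hx

theorem pathCoeff_linearCombination (q : Fin n × ℕ) (c : Fin n × ℕ →₀ K) :
    pathCoeff K q (Finsupp.linearCombination K (fun q : Fin n × ℕ => path K q.1 q.2) c) =
      c q := by
  have h : pathCoeff K q ∘ₗ
      Finsupp.linearCombination K (fun q : Fin n × ℕ => path K q.1 q.2) = Finsupp.lapply q :=
    Finsupp.lhom_ext fun q' a => by simp [pathCoeff_path, Finsupp.single_apply]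
  exact LinearMap.congr_fun h c

theorem exists_linearCombination_of_mem_KE (hx : x ∈ (cycGraph n).KE K) :
    ∃ c : Fin n × ℕ →₀ K,
      Finsupp.linearCombination K (fun q : Fin n × ℕ => path K q.1 q.2) c = x := by
  rw [← LinearMap.mem_range, Finsupp.range_linearCombination]
  exact mem_span_path_of_mem_KE hx

theorem eq_zero_of_pathCoeff_eq_zero (hx : x ∈ (cycGraph n).KE K)
    (h : ∀ q, pathCoeff K q x = 0) : x = 0 := by
  obtain ⟨c, rfl⟩ := exists_linearCombination_of_mem_KE hx
  have hc : c = 0 := Finsupp.ext fun q => by rw [← pathCoeff_linearCombination, h]; rfl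
  rw [hc, map_zero]

theorem exists_polynomial_coeff_eq_pathCoeff (hx : x ∈ (cycGraph n).KE K) :
    ∃ p : K[X], ∀ m, p.coeff m = pathCoeff K (0, m * n) x := by
  obtain ⟨c, rfl⟩ := exists_linearCombination_of_mem_KE hx
  have hinj : Function.Injective fun m : ℕ => ((0 : Fin n), m * n) := fun a b h =>
    Nat.eq_of_mul_eq_mul_right (NeZero.pos n) (Prod.ext_iff.1 h).2
  exact ⟨⟨AddMonoidAlgebra.ofCoeff (c.comapDomain _ hinj.injOn)⟩, fun m => by
    rw [pathCoeff_linearCombination]; rfl⟩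

theorem vtx_mem_KE (i : Fin n) : (cycGraph n).vtx K i ∈ (cycGraph n).KE K := path_mem_KE i 0

theorem edg_mem_KE (i : Fin n) : (cycGraph n).edg K i ∈ (cycGraph n).KE K :=
  path_one (K := K) i ▸ path_mem_KE i 1

variable {z : (cycGraph n).PA K}

theorem pathCoeff_eq_zero_of_mem_relCenter (hz : z ∈ (cycGraph n).relCenter K) (i : Fin n)
    {ℓ : ℕ} (hℓ : ¬n ∣ ℓ) : pathCoeff K (i, ℓ) z = 0 := by
  rw [← pathCoeff_vtx_mul hz.1, hz.2 _ (vtx_mem_KE i), pathCoeff_mul_vtx_of_not_dvd hz.1 i hℓ]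

theorem pathCoeff_succ_eq_of_mem_relCenter (hz : z ∈ (cycGraph n).relCenter K) (j : Fin n)
    {ℓ : ℕ} (hℓ : n ∣ ℓ) : pathCoeff K (j + 1, ℓ) z = pathCoeff K (j, ℓ) z := by
  rw [← pathCoeff_edg_mul hz.1, hz.2 _ (edg_mem_KE j), pathCoeff_mul_edg_of_dvd hz.1 j hℓ]

theorem pathCoeff_eq_of_mem_relCenter (hz : z ∈ (cycGraph n).relCenter K) (i : Fin n)
    {ℓ : ℕ} (hℓ : n ∣ ℓ) : pathCoeff K (i, ℓ) z = pathCoeff K (0, ℓ) z := by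
  suffices ∀ k : ℕ, pathCoeff K ((k : Fin n), ℓ) z = pathCoeff K (0, ℓ) z by
    simpa using this i
  intro k
  induction k with
  | zero => rw [Nat.cast_zero]
  | succ k ih => rw [Nat.cast_succ, pathCoeff_succ_eq_of_mem_relCenter hz _ hℓ, ih]

variable (K n) in
noncomputable def centerMap : K[X] →ₙₐ[K] (cycGraph n).PA K :=
  orthogonalIdempotents_vtx.cornerAeval (cycElem K n) commute_vtx_cycElem

theorem centerMap_eq_sum (p : K[X]) :
    centerMap K n p =
      ∑ i : Fin n, p.sum fun m a => a • ((cycGraph n).vtx K i * cycElem K n i ^ m) := by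
  simp only [centerMap, OrthogonalIdempotents.cornerAeval_apply, mul_aeval_eq_sum]

theorem vtx_mul_centerMap (i : Fin n) (p : K[X]) :
    (cycGraph n).vtx K i * centerMap K n p = (cycGraph n).vtx K i * aeval (cycElem K n i) p :=
  orthogonalIdempotents_vtx.mul_cornerAeval _ _ p i

theorem centerMap_mul_vtx (i : Fin n) (p : K[X]) :
    centerMap K n p * (cycGraph n).vtx K i = (cycGraph n).vtx K i * aeval (cycElem K n i) p :=
  orthogonalIdempotents_vtx.cornerAeval_mul _ _ p i

theorem centerMap_mem_KE (p : K[X]) : centerMap K n p ∈ (cycGraph n).KE K := by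
  rw [centerMap_eq_sum]
  refine sum_mem fun i _ => sum_mem fun m _ => SMulMemClass.smul_mem _ ?_
  rw [vtx_mul_cycElem_pow]
  exact path_mem_KE i _

theorem commute_vtx_centerMap (i : Fin n) (p : K[X]) :
    Commute ((cycGraph n).vtx K i) (centerMap K n p) :=
  (vtx_mul_centerMap i p).trans (centerMap_mul_vtx i p).symm

theorem commute_edg_centerMap (j : Fin n) (p : K[X]) :
    Commute ((cycGraph n).edg K j) (centerMap K n p) := by
  have hs : (cycGraph n).vtx K j * (cycGraph n).edg K j = (cycGraph n).edg K j :=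
    (vtx_mul_edg j j).trans (if_pos rfl)
  have hr : (cycGraph n).edg K j * (cycGraph n).vtx K (j + 1 : Fin n) = (cycGraph n).edg K j :=
    (edg_mul_vtx j (j + 1)).trans (if_pos rfl)
  calc (cycGraph n).edg K j * centerMap K n p
      = (cycGraph n).edg K j * ((cycGraph n).vtx K (j + 1 : Fin n) * centerMap K n p) := by
        rw [← mul_assoc, hr]
    _ = (cycGraph n).edg K j * aeval (cycElem K n (j + 1)) p := by
        rw [vtx_mul_centerMap, ← mul_assoc, hr]
    _ = aeval (cycElem K n j) p * (cycGraph n).edg K j := (semiconjBy_edg_cycElem j).aeval p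
    _ = centerMap K n p * (cycGraph n).edg K j := by
        rw [← hs, ← mul_assoc, ← mul_assoc, centerMap_mul_vtx,
          ((commute_vtx_cycElem j).aeval p).eq]

theorem centerMap_mem_relCenter (p : K[X]) : centerMap K n p ∈ (cycGraph n).relCenter K := by
  refine ⟨centerMap_mem_KE p, fun a ha => ?_⟩
  refine (NonUnitalAlgebra.commute_of_mem_adjoin_of_forall_mem_commute ha ?_).eq.symm
  rintro _ (⟨i, rfl⟩ | ⟨e, rfl⟩)
  exacts [(commute_vtx_centerMap i p).symm, (commute_edg_centerMap e p).symm]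

theorem pathCoeff_centerMap (p : K[X]) (m : ℕ) :
    pathCoeff K (0, m * n) (centerMap K n p) = p.coeff m := by
  rw [← pathCoeff_vtx_mul (centerMap_mem_KE p), vtx_mul_centerMap, mul_aeval_eq_sum,
    Polynomial.sum_def, map_sum]
  simp only [vtx_mul_cycElem_pow, map_smul, pathCoeff_path, Prod.mk.injEq, mul_eq_mul_right_iff,
    NeZero.ne n, or_false, true_and, smul_eq_mul, mul_ite, mul_one, mul_zero, Finset.sum_ite_eq',
    mem_support_iff, ne_eq, ite_eq_left_iff, not_not]
  exact Eq.symm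

theorem centerMap_injective : Function.Injective (centerMap K n) := fun p q h =>
  Polynomial.ext fun m => by rw [← pathCoeff_centerMap (n := n) p, h, pathCoeff_centerMap]

theorem exists_centerMap_eq_of_mem_relCenter (hz : z ∈ (cycGraph n).relCenter K) :
    ∃ p, centerMap K n p = z := by
  obtain ⟨p, hp⟩ := exists_polynomial_coeff_eq_pathCoeff hz.1
  refine ⟨p, sub_eq_zero.1 ?_⟩
  refine eq_zero_of_pathCoeff_eq_zero (sub_mem (centerMap_mem_KE p) hz.1) ?_
  rintro ⟨i, ℓ⟩
  have hp' := centerMap_mem_relCenter (K := K) (n := n) p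
  rw [map_sub, sub_eq_zero]
  by_cases hℓ : n ∣ ℓ
  · rw [pathCoeff_eq_of_mem_relCenter hz i hℓ, pathCoeff_eq_of_mem_relCenter hp' i hℓ]
    obtain ⟨m, rfl⟩ := hℓ
    rw [mul_comm, pathCoeff_centerMap, hp]
  · rw [pathCoeff_eq_zero_of_mem_relCenter hz i hℓ,
      pathCoeff_eq_zero_of_mem_relCenter hp' i hℓ]

end cycGraph

/-- For a cycle graph, `Z(KE) = { Σᵢ p(cᵢ) : p ∈ K[x] }` (where `p(cᵢ)` is
evaluated in the corner `uᵢ(KE)uᵢ`, with `cᵢ⁰ = uᵢ`), and `Σᵢ p(cᵢ) ↦ p` is a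
`K`-algebra isomorphism `Z(KE) ≅ K[x]`. -/
theorem stmt8 (K : Type) [Field K] (n : ℕ) [NeZero n] :
    ∃ Φ : Polynomial K → (cycGraph n).PA K,
      (∀ p : Polynomial K, Φ p =
          ∑ i : Fin n, p.sum fun m a => a • ((cycGraph n).vtx K i * cycElem K n i ^ m)) ∧
      Set.range Φ = (cycGraph n).relCenter K ∧
      Function.Injective Φ ∧
      (∀ p q, Φ (p + q) = Φ p + Φ q) ∧
      (∀ p q, Φ (p * q) = Φ p * Φ q) ∧
      (∀ (c : K) (p), Φ (c • p) = c • Φ p) := by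
  refine ⟨cycGraph.centerMap K n, cycGraph.centerMap_eq_sum, ?_, cycGraph.centerMap_injective,
    map_add _, map_mul _, map_smul _⟩
  ext z
  exact ⟨by rintro ⟨p, rfl⟩; exact cycGraph.centerMap_mem_relCenter p,
    cycGraph.exists_centerMap_eq_of_mem_relCenter⟩
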